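/- In the random key graph K(n; K, P) with 2K ≤ P, for each r = 2,…,n, the probability that the induced subgraph on vertices {1,…,r} is connected is at most r^{r-2} (1 - q)^{r-1}, where q = C(P-K, K)/C(P, K). -/

import Mathlib

open Finset

/-- A key ring: a `K`-element subset of the key pool `{1,…,P}`. -/
abbrev KeyRing (P K : ℕ) := {S : Finset (Fin P) // S.card = K}

open Classical in
/-- Probability of an event under independent uniform assignment of key rings
to `n` nodes. -/
noncomputable def pr (n P K : ℕ) (E : (Fin n → KeyRing P K) → Prop) : ℝ :=
  ((Finset.univ : Finset (Fin n → KeyRing P K)).filter (fun κ => E κ)).card /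
    (Fintype.card (Fin n → KeyRing P K) : ℝ)

/-- The random key graph: distinct nodes are adjacent iff their key rings intersect. -/
def rkg {n P K : ℕ} (κ : Fin n → KeyRing P K) : SimpleGraph (Fin n) where
  Adj i j := i ≠ j ∧ ((κ i).1 ∩ (κ j).1).Nonempty
  symm := ⟨fun i j ⟨h1, h2⟩ => ⟨h1.symm, by rwa [Finset.inter_comm]⟩⟩
  loopless := ⟨fun i ⟨h, _⟩ => h rfl⟩

/-!
A connected graph contains a spanning tree, so the event is covered by the union, over the
labelled trees on `{1,…,r}`, of the events that all `r - 1` edges of the tree are present. There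
are at most `r^(r-2)` such trees, since the Prüfer code embeds them into sequences of length
`r - 2`. For a fixed tree, prune a leaf `ℓ` hanging from `p`: whatever the other key rings are,
the ring of `ℓ` meets that of `p` with probability `1 - q`, so by induction the tree is present
with probability at most `(1 - q)^(r-1)`.
-/

section Trees

variable {α : Type*}

def Linked (E : Finset (Sym2 α)) : α → α → Prop :=
  Relation.ReflTransGen fun a b => s(a, b) ∈ E

-- Trees are edge sets spanning a finset of vertices, so that pruning a leaf stays in one type.
structure IsTreeOn (V : Finset α) (E : Finset (Sym2 α)) : Prop where
  subset_sym2 : E ⊆ V.sym2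
  not_isDiag : ∀ e ∈ E, ¬e.IsDiag
  card_add_one : #E + 1 = #V
  linked : ∀ x ∈ V, ∀ y ∈ V, Linked E x y

theorem IsTreeOn.mem_of_mem_edge {V : Finset α} {E : Finset (Sym2 α)} (hT : IsTreeOn V E)
    {e : Sym2 α} (he : e ∈ E) {v : α} (hv : v ∈ e) : v ∈ V :=
  mem_sym2_iff.1 (hT.subset_sym2 he) v hv

open Classical in
noncomputable def treesOn (V : Finset α) : Finset (Finset (Sym2 α)) :=
  {E ∈ V.sym2.powerset | IsTreeOn V E}

theorem mem_treesOn {V : Finset α} {E : Finset (Sym2 α)} : E ∈ treesOn V ↔ IsTreeOn V E := by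
  classical
  simpa [treesOn] using fun hT : IsTreeOn V E => hT.subset_sym2

theorem SimpleGraph.IsTree.isTreeOn_edgeFinset {ι : Type*} [Fintype ι] {T : SimpleGraph ι}
    [Fintype T.edgeSet] (hT : T.IsTree) : IsTreeOn univ T.edgeFinset where
  subset_sym2 _ _ := mem_sym2_iff.2 fun _ _ => mem_univ _
  not_isDiag _ he := T.not_isDiag_of_mem_edgeSet (SimpleGraph.mem_edgeFinset.1 he)
  card_add_one := by rw [hT.card_edgeFinset, card_univ]
  linked x _ y _ := Relation.ReflTransGen.mono (fun _ _ h => SimpleGraph.mem_edgeFinset.2 h) x y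
    ((SimpleGraph.reachable_iff_reflTransGen x y).1 (hT.connected.preconnected x y))

variable [DecidableEq α]

def edgeDegree (E : Finset (Sym2 α)) (v : α) : ℕ := #{e ∈ E | v ∈ e}

def IsPendant (E : Finset (Sym2 α)) (ℓ p : α) : Prop := {e ∈ E | ℓ ∈ e} = {s(ℓ, p)}

theorem sum_edgeDegree_le (V : Finset α) (E : Finset (Sym2 α)) :
    ∑ v ∈ V, edgeDegree E v ≤ 2 * #E := by
  have hsum : ∑ v ∈ V, edgeDegree E v = ∑ e ∈ E, #{v ∈ V | v ∈ e} :=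
    sum_card_bipartiteAbove_eq_sum_card_bipartiteBelow (fun v e => v ∈ e)
  have hedge (e : Sym2 α) : #{v ∈ V | v ∈ e} ≤ 2 := calc
    #{v ∈ V | v ∈ e} ≤ #e.toFinset := card_le_card fun v hv => by simpa using (mem_filter.1 hv).2
    _ ≤ 2 := by rw [Sym2.card_toFinset]; split_ifs <;> omega
  rw [hsum, mul_comm, ← smul_eq_mul, ← sum_const]
  exact sum_le_sum fun e _ => hedge e

theorem edgeDegree_erase_of_notMem {E : Finset (Sym2 α)} {e : Sym2 α} {v : α} (hv : v ∉ e) :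
    edgeDegree (E.erase e) v = edgeDegree E v := by
  rw [edgeDegree, edgeDegree, filter_erase, erase_eq_of_notMem (by simp [hv])]

theorem edgeDegree_erase_add_one {E : Finset (Sym2 α)} {e : Sym2 α} {v : α} (he : e ∈ E)
    (hv : v ∈ e) : edgeDegree (E.erase e) v + 1 = edgeDegree E v := by
  rw [edgeDegree, edgeDegree, filter_erase, card_erase_add_one (mem_filter.2 ⟨he, hv⟩)]

theorem edgeDegree_eq_one_iff {E : Finset (Sym2 α)} {ℓ : α} :
    edgeDegree E ℓ = 1 ↔ ∃ p, IsPendant E ℓ p := by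
  refine ⟨fun h => ?_, fun ⟨p, hp⟩ => by rw [edgeDegree, hp, card_singleton]⟩
  obtain ⟨e, he⟩ := card_eq_one.1 h
  have hℓe : ℓ ∈ e := (mem_filter.1 (he ▸ mem_singleton_self e : e ∈ {e ∈ E | ℓ ∈ e})).2
  exact ⟨Sym2.Mem.other hℓe, by rw [IsPendant, he, Sym2.other_spec]⟩

namespace IsPendant

variable {E : Finset (Sym2 α)} {ℓ p : α}

theorem mem (h : IsPendant E ℓ p) : s(ℓ, p) ∈ E :=
  (mem_filter.1 (h ▸ mem_singleton_self _ : s(ℓ, p) ∈ {e ∈ E | ℓ ∈ e})).1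

theorem eq_of_mem (h : IsPendant E ℓ p) {e : Sym2 α} (he : e ∈ E) (hℓ : ℓ ∈ e) : e = s(ℓ, p) :=
  mem_singleton.1 (h ▸ mem_filter.2 ⟨he, hℓ⟩)

theorem notMem_of_mem_erase (h : IsPendant E ℓ p) {e : Sym2 α} (he : e ∈ E.erase s(ℓ, p)) :
    ℓ ∉ e := fun hℓ => (ne_of_mem_erase he) (h.eq_of_mem (mem_of_mem_erase he) hℓ)

theorem linked_erase (h : IsPendant E ℓ p) {x y : α} (hxy : Linked E x y) (hx : x ≠ ℓ)
    (hy : y ≠ ℓ) : Linked (E.erase s(ℓ, p)) x y := by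
  -- Reroute every walk through `p` instead of the leaf `ℓ`.
  let f (v : α) : α := if v = ℓ then p else v
  have hstep : ∀ a b, s(a, b) ∈ E → Linked (E.erase s(ℓ, p)) (f a) (f b) := by
    intro a b hab
    by_cases hpend : s(a, b) = s(ℓ, p)
    · have hfab : f a = f b := by
        rcases Sym2.eq_iff.1 hpend with ⟨rfl, rfl⟩ | ⟨rfl, rfl⟩ <;> simp [f]
      exact hfab ▸ Relation.ReflTransGen.refl
    · have ha : a ≠ ℓ := fun ha => hpend (h.eq_of_mem hab (ha ▸ Sym2.mem_mk_left a b))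
      have hb : b ≠ ℓ := fun hb => hpend (h.eq_of_mem hab (hb ▸ Sym2.mem_mk_right a b))
      simp only [f, if_neg ha, if_neg hb]
      exact Relation.ReflTransGen.single (mem_erase.2 ⟨hpend, hab⟩)
  have hlift := Relation.ReflTransGen.lift' f hstep x y hxy
  simp only [Function.onFun, f, if_neg hx, if_neg hy] at hlift
  exact hlift

end IsPendant

namespace IsTreeOn

variable {V : Finset α} {E : Finset (Sym2 α)} {ℓ p : α}

theorem edgeDegree_pos (hT : IsTreeOn V E) (h2 : 2 ≤ #V) {v : α} (hv : v ∈ V) :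
    0 < edgeDegree E v := by
  obtain ⟨y, hy, hyv⟩ := exists_mem_ne h2 v
  rcases Relation.ReflTransGen.cases_head (hT.linked v hv y hy) with h | ⟨c, hvc, -⟩
  · exact absurd h.symm hyv
  · exact card_pos.2 ⟨_, mem_filter.2 ⟨hvc, Sym2.mem_mk_left _ _⟩⟩

theorem exists_isPendant (hT : IsTreeOn V E) (h2 : 2 ≤ #V) : ∃ ℓ p, IsPendant E ℓ p := by
  suffices ∃ ℓ ∈ V, edgeDegree E ℓ = 1 by
    obtain ⟨ℓ, -, hℓ⟩ := this
    exact ⟨ℓ, edgeDegree_eq_one_iff.1 hℓ⟩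
  -- Otherwise every degree is at least 2, against `∑ deg ≤ 2 #E = 2 #V - 2`.
  by_contra! h
  have hlow : ∑ _v ∈ V, 2 ≤ ∑ v ∈ V, edgeDegree E v := sum_le_sum fun v hv => by
    have := hT.edgeDegree_pos h2 hv
    have := h v hv
    omega
  have := sum_edgeDegree_le V E
  have := hT.card_add_one
  rw [sum_const, smul_eq_mul] at hlow
  omega

theorem ne_of_isPendant (hT : IsTreeOn V E) (h : IsPendant E ℓ p) : p ≠ ℓ := fun hpℓ =>
  hT.not_isDiag _ h.mem (hpℓ ▸ Sym2.mk_isDiag_iff.2 rfl)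

theorem left_mem_of_isPendant (hT : IsTreeOn V E) (h : IsPendant E ℓ p) : ℓ ∈ V :=
  hT.mem_of_mem_edge h.mem (Sym2.mem_mk_left ℓ p)

theorem right_mem_of_isPendant (hT : IsTreeOn V E) (h : IsPendant E ℓ p) : p ∈ V :=
  hT.mem_of_mem_edge h.mem (Sym2.mem_mk_right ℓ p)

theorem erase_isPendant (hT : IsTreeOn V E) (h : IsPendant E ℓ p) :
    IsTreeOn (V.erase ℓ) (E.erase s(ℓ, p)) where
  subset_sym2 e he := mem_sym2_iff.2 fun v hv => mem_erase.2
    ⟨fun hvℓ => h.notMem_of_mem_erase he (hvℓ ▸ hv), hT.mem_of_mem_edge (mem_of_mem_erase he) hv⟩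
  not_isDiag e he := hT.not_isDiag e (mem_of_mem_erase he)
  card_add_one := by
    have := hT.card_add_one
    have := card_pos.2 ⟨_, h.mem⟩
    rw [card_erase_of_mem h.mem, card_erase_of_mem (hT.left_mem_of_isPendant h)]
    omega
  linked x hx y hy := h.linked_erase (hT.linked x (mem_of_mem_erase hx) y (mem_of_mem_erase hy))
    (ne_of_mem_erase hx) (ne_of_mem_erase hy)

theorem two_le_edgeDegree_of_isPendant (hT : IsTreeOn V E) (h3 : 2 < #V) (h : IsPendant E ℓ p) :
    2 ≤ edgeDegree E p := by
  have hp : p ∈ V.erase ℓ := mem_erase.2 ⟨hT.ne_of_isPendant h, hT.right_mem_of_isPendant h⟩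
  have hcard : 2 ≤ #(V.erase ℓ) := by
    rw [card_erase_of_mem (hT.left_mem_of_isPendant h)]
    omega
  have := (hT.erase_isPendant h).edgeDegree_pos hcard hp
  have := edgeDegree_erase_add_one h.mem (Sym2.mem_mk_right ℓ p)
  omega

theorem eq_of_card_le_two {E' : Finset (Sym2 α)} (hT : IsTreeOn V E) (hT' : IsTreeOn V E')
    (h2 : #V ≤ 2) : E = E' := by
  have := hT.card_add_one
  have := hT'.card_add_one
  rcases (by omega : #V ≤ 1 ∨ #V = 2) with h1 | h2
  · rw [card_eq_zero.1 (by omega : #E = 0), card_eq_zero.1 (by omega : #E' = 0)]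
  obtain ⟨a, b, hab, rfl⟩ := card_eq_two.1 h2
  have hedge {F : Finset (Sym2 α)} (hF : IsTreeOn {a, b} F) : F = {s(a, b)} := by
    refine eq_of_subset_of_card_le (fun e he => ?_) (by have := hF.card_add_one; simp_all)
    have hne := hF.not_isDiag e he
    have hmem := hF.subset_sym2 he
    induction e with
    | _ x y =>
      simp only [mem_sym2_iff, Sym2.mem_iff, mem_insert, mem_singleton, forall_eq_or_imp,
        forall_eq, Sym2.mk_isDiag_iff] at hmem hne
      rcases hmem with ⟨rfl | rfl, rfl | rfl⟩ <;> simp_all [Sym2.eq_swap]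
  rw [hedge hT, hedge hT']

end IsTreeOn

end Trees

section Prufer

variable {β : Type*} [LinearOrder β] {V : Finset β} {E : Finset (Sym2 β)} {v : β}

def pruferCode (V : Finset β) (E : Finset (Sym2 β)) : List β :=
  if 2 < #V then
    if hL : {v ∈ V | edgeDegree E v = 1}.Nonempty then
      let ℓ := {v ∈ V | edgeDegree E v = 1}.max' hL
      if hp : {q ∈ V | s(ℓ, q) ∈ E}.Nonempty then
        let p := {q ∈ V | s(ℓ, q) ∈ E}.max' hp
        p :: pruferCode (V.erase ℓ) (E.erase s(ℓ, p))
      else []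
    else []
  else []
termination_by #V
decreasing_by exact card_erase_lt_of_mem (mem_filter.1 (max'_mem _ _)).1

theorem pruferCode_of_card_le_two (h : #V ≤ 2) : pruferCode V E = [] := by
  rw [pruferCode, if_neg (by omega)]

theorem IsTreeOn.pruferCode_eq_cons (hT : IsTreeOn V E) (h3 : 2 < #V) :
    ∃ ℓ p, IsPendant E ℓ p ∧ (∀ v ∈ V, edgeDegree E v = 1 → v ≤ ℓ) ∧
      pruferCode V E = p :: pruferCode (V.erase ℓ) (E.erase s(ℓ, p)) := by
  have hL : {v ∈ V | edgeDegree E v = 1}.Nonempty := by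
    obtain ⟨ℓ, p, h⟩ := hT.exists_isPendant h3.le
    exact ⟨ℓ, mem_filter.2 ⟨hT.left_mem_of_isPendant h, edgeDegree_eq_one_iff.2 ⟨p, h⟩⟩⟩
  obtain ⟨p, hp⟩ := edgeDegree_eq_one_iff.1 (mem_filter.1 (max'_mem _ hL)).2
  have hnbr : {q ∈ V | s({v ∈ V | edgeDegree E v = 1}.max' hL, q) ∈ E} = {p} := by
    ext q
    simp only [mem_filter, mem_singleton]
    refine ⟨fun ⟨_, hq⟩ => Sym2.congr_right.1 (hp.eq_of_mem hq (Sym2.mem_mk_left _ _)),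
      fun hq => hq ▸ ⟨hT.right_mem_of_isPendant hp, hp.mem⟩⟩
  refine ⟨_, p, hp, fun v hv h1 => le_max' _ v (mem_filter.2 ⟨hv, h1⟩), ?_⟩
  rw [pruferCode, if_pos h3, dif_pos hL, dif_pos (hnbr ▸ singleton_nonempty p)]
  simp only [hnbr, max'_singleton]

theorem IsTreeOn.length_pruferCode (hT : IsTreeOn V E) : (pruferCode V E).length = #V - 2 := by
  induction hn : #V generalizing V E with
  | zero => rw [pruferCode_of_card_le_two (by omega)]; rfl
  | succ n ih =>
    by_cases h3 : 2 < #V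
    · obtain ⟨ℓ, p, hp, -, hcode⟩ := hT.pruferCode_eq_cons h3
      have hcard := card_erase_of_mem (hT.left_mem_of_isPendant hp)
      rw [hcode, List.length_cons, ih (hT.erase_isPendant hp) (by omega)]
      omega
    · rw [pruferCode_of_card_le_two (by omega)]
      simp only [List.length_nil]
      omega

theorem IsTreeOn.mem_pruferCode_iff (hT : IsTreeOn V E) :
    v ∈ pruferCode V E ↔ v ∈ V ∧ 2 ≤ edgeDegree E v := by
  induction hn : #V generalizing V E with
  | zero =>
    rw [pruferCode_of_card_le_two (by omega)]
    simp [card_eq_zero.1 hn]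
  | succ n ih =>
    by_cases h3 : 2 < #V
    · obtain ⟨ℓ, p, hp, -, hcode⟩ := hT.pruferCode_eq_cons h3
      have hℓ := hT.left_mem_of_isPendant hp
      have hpℓ := hT.ne_of_isPendant hp
      rw [hcode, List.mem_cons, ih (hT.erase_isPendant hp) (by rw [card_erase_of_mem hℓ]; omega)]
      by_cases hvp : v = p
      · subst hvp
        simp [hT.right_mem_of_isPendant hp, hT.two_le_edgeDegree_of_isPendant h3 hp]
      by_cases hvℓ : v = ℓ
      · subst hvℓ
        simp [hvp, edgeDegree_eq_one_iff.2 ⟨p, hp⟩]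
      have hve : v ∉ s(ℓ, p) := by simp [hvp, hvℓ]
      simp [hvp, hvℓ, edgeDegree_erase_of_notMem hve]
    · have hdeg : edgeDegree E v ≤ #E := card_filter_le _ _
      have := hT.card_add_one
      rw [pruferCode_of_card_le_two (by omega)]
      simp only [List.not_mem_nil, false_iff, not_and]
      omega

theorem IsTreeOn.edgeDegree_eq_one_iff_notMem_pruferCode (hT : IsTreeOn V E) (h2 : 2 ≤ #V)
    (hv : v ∈ V) : edgeDegree E v = 1 ↔ v ∉ pruferCode V E := by
  have := hT.edgeDegree_pos h2 hv
  rw [hT.mem_pruferCode_iff, not_and, imp_iff_right hv]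
  omega

theorem pruferCode_injOn : Set.InjOn (pruferCode V) {E | IsTreeOn V E} := by
  induction hn : #V generalizing V with
  | zero => exact fun E₁ h₁ E₂ h₂ _ => h₁.eq_of_card_le_two h₂ (by omega)
  | succ n ih =>
    intro E₁ h₁ E₂ h₂ hcode
    by_cases h3 : 2 < #V
    swap
    · exact h₁.eq_of_card_le_two h₂ (by omega)
    obtain ⟨ℓ₁, p₁, hp₁, hmax₁, hcode₁⟩ := h₁.pruferCode_eq_cons h3
    obtain ⟨ℓ₂, p₂, hp₂, hmax₂, hcode₂⟩ := h₂.pruferCode_eq_cons h3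
    -- The leaves are the vertices missing from the code, so both trees lose the same leaf first.
    have hleaf (v : β) (hv : v ∈ V) : edgeDegree E₁ v = 1 ↔ edgeDegree E₂ v = 1 := by
      rw [h₁.edgeDegree_eq_one_iff_notMem_pruferCode h3.le hv,
        h₂.edgeDegree_eq_one_iff_notMem_pruferCode h3.le hv, hcode]
    have hℓ₁ := h₁.left_mem_of_isPendant hp₁
    have hℓ₂ := h₂.left_mem_of_isPendant hp₂
    have hℓ : ℓ₁ = ℓ₂ := le_antisymm
      (hmax₂ ℓ₁ hℓ₁ ((hleaf ℓ₁ hℓ₁).1 (edgeDegree_eq_one_iff.2 ⟨p₁, hp₁⟩)))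
      (hmax₁ ℓ₂ hℓ₂ ((hleaf ℓ₂ hℓ₂).2 (edgeDegree_eq_one_iff.2 ⟨p₂, hp₂⟩)))
    subst hℓ
    rw [hcode₁, hcode₂, List.cons.injEq] at hcode
    obtain ⟨rfl, hrest⟩ := hcode
    have herase := ih (by rw [card_erase_of_mem hℓ₁]; omega)
      (h₁.erase_isPendant hp₁) (h₂.erase_isPendant hp₂) hrest
    rw [← insert_erase hp₁.mem, ← insert_erase hp₂.mem, herase]

theorem card_treesOn_le (V : Finset α) : #(treesOn V) ≤ #V ^ (#V - 2) := by
  -- Any linear order on `α` will do to define the Prüfer code.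
  let := IsWellOrder.linearOrder (WellOrderingRel (α := α))
  calc #(treesOn V)
      ≤ #((Fintype.piFinset fun _ : Fin (#V - 2) => V).image List.ofFn) := by
        refine card_le_card_of_injOn (pruferCode V) (fun E hE => ?_)
          (fun E₁ h₁ E₂ h₂ h => pruferCode_injOn (mem_treesOn.1 h₁) (mem_treesOn.1 h₂) h)
        have hT := mem_treesOn.1 hE
        rw [← hT.length_pruferCode]
        exact mem_image.2 ⟨fun i => (pruferCode V E)[i], Fintype.mem_piFinset.2 fun i =>
          (hT.mem_pruferCode_iff.1 (List.getElem_mem _)).1, List.ofFn_getElem⟩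
    _ ≤ #(Fintype.piFinset fun _ : Fin (#V - 2) => V) := card_image_le
    _ = #V ^ (#V - 2) := by simp

end Prufer

section RelatedCount

variable {ι β X : Type*} [DecidableEq ι] [Fintype β] [DecidableEq β] [Fintype X]
  {R : X → X → Prop} [DecidableRel R] {c : ℕ} {f : ι → β}

def EdgesRelated (R : X → X → Prop) (f : ι → β) (E : Finset (Sym2 ι)) (κ : β → X) : Prop :=
  ∀ a b, s(a, b) ∈ E → R (κ (f a)) (κ (f b))

open Classical in
theorem card_edgesRelated_insert_mul_le (hf : f.Injective) (hR : ∀ y, #{x | R x y} ≤ c)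
    {E : Finset (Sym2 ι)} {ℓ p : ι} (hpℓ : p ≠ ℓ) (hℓ : ∀ e ∈ E, ℓ ∉ e) :
    #{κ | EdgesRelated R f (insert s(ℓ, p) E) κ} * Fintype.card X ≤
      c * #{κ | EdgesRelated R f E κ} := by
  set S : Finset (β → X) := {κ | EdgesRelated R f (insert s(ℓ, p) E) κ}
  set S' : Finset (β → X) := {κ | EdgesRelated R f E κ}
  set T : Finset ((β → X) × X) := {z | EdgesRelated R f E z.1 ∧ R z.2 (z.1 (f p))}
  -- Re-sampling the key at `f ℓ` and remembering the old one injects `S × X` into `T`.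
  let resample (z : (β → X) × X) : (β → X) × X := (Function.update z.1 (f ℓ) z.2, z.1 (f ℓ))
  have hmaps : Set.MapsTo resample ↑(S ×ˢ (univ : Finset X)) ↑T := by
    rintro ⟨κ, y⟩ hz
    have hκ : EdgesRelated R f (insert s(ℓ, p) E) κ := by simpa [S] using hz
    refine mem_filter.2 ⟨mem_univ _, fun a b hab => ?_, ?_⟩
    · have ha : f a ≠ f ℓ := hf.ne fun h => hℓ _ hab (h ▸ Sym2.mem_mk_left a b)
      have hb : f b ≠ f ℓ := hf.ne fun h => hℓ _ hab (h ▸ Sym2.mem_mk_right a b)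
      simpa [resample, Function.update_of_ne ha, Function.update_of_ne hb] using
        hκ a b (mem_insert_of_mem hab)
    · simpa [resample, Function.update_of_ne (hf.ne hpℓ)] using hκ ℓ p (mem_insert_self _ _)
  have hinj : Set.InjOn resample ↑(S ×ˢ (univ : Finset X)) := by
    rintro ⟨κ, y⟩ - ⟨κ', y'⟩ - h
    simp only [resample, Prod.mk.injEq] at h
    have hy : y = y' := by simpa using congrFun h.1 (f ℓ)
    refine Prod.ext (funext fun i => ?_) hy
    by_cases hi : i = f ℓ
    · exact hi ▸ h.2
    · simpa [Function.update_of_ne hi] using congrFun h.1 i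
  have hfiber (κ : β → X) : #{z ∈ T | z.1 = κ} ≤ c := by
    refine (card_le_card_of_injOn Prod.snd (t := {x | R x (κ (f p))}) ?_ ?_).trans (hR _)
    · intro z hz
      simp only [T, coe_filter, mem_filter, mem_univ, true_and, Set.mem_ofPred_eq] at hz ⊢
      exact hz.2 ▸ hz.1.2
    · intro z hz w hw h
      simp only [T, coe_filter, mem_filter, Set.mem_ofPred_eq] at hz hw
      exact Prod.ext (hz.2.trans hw.2.symm) h
  calc #S * Fintype.card X = #(S ×ˢ (univ : Finset X)) := by rw [card_product, card_univ]
    _ ≤ #T := card_le_card_of_injOn resample hmaps hinj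
    _ ≤ c * #S' := card_le_mul_card_image_of_maps_to
        (fun z hz => mem_filter.2 ⟨mem_univ _, (mem_filter.1 hz).2.1⟩) c fun κ _ => hfiber κ

open Classical in
theorem IsTreeOn.card_edgesRelated_mul_le (hf : f.Injective) (hR : ∀ y, #{x | R x y} ≤ c)
    {V : Finset ι} {E : Finset (Sym2 ι)} (hT : IsTreeOn V E) :
    #{κ | EdgesRelated R f E κ} * Fintype.card X ^ #E ≤
      c ^ #E * Fintype.card X ^ Fintype.card β := by
  induction hk : #E generalizing V E with
  | zero => simp [card_eq_zero.1 hk, EdgesRelated]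
  | succ k ih =>
    obtain ⟨ℓ, p, hp⟩ := hT.exists_isPendant (by have := hT.card_add_one; omega)
    have hstep := card_edgesRelated_insert_mul_le hf hR (hT.ne_of_isPendant hp)
      fun e he => hp.notMem_of_mem_erase he
    rw [insert_erase hp.mem] at hstep
    have hrest := ih (hT.erase_isPendant hp) (by rw [card_erase_of_mem hp.mem, hk]; rfl)
    calc #{κ | EdgesRelated R f E κ} * Fintype.card X ^ (k + 1)
        = #{κ | EdgesRelated R f E κ} * Fintype.card X * Fintype.card X ^ k := by ring
      _ ≤ c * (#{κ | EdgesRelated R f (E.erase s(ℓ, p)) κ} * Fintype.card X ^ k) := by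
        rw [← mul_assoc]
        gcongr
      _ ≤ c * (c ^ k * Fintype.card X ^ Fintype.card β) := by gcongr
      _ = c ^ (k + 1) * Fintype.card X ^ Fintype.card β := by ring

open Classical in
theorem card_connected_mul_le [Fintype ι] (f : ι ↪ β) (G : (β → X) → SimpleGraph ι)
    (hG : ∀ κ a b, (G κ).Adj a b → R (κ (f a)) (κ (f b))) (hR : ∀ y, #{x | R x y} ≤ c) :
    #{κ | (G κ).Connected} * Fintype.card X ^ (Fintype.card ι - 1) ≤
      Fintype.card ι ^ (Fintype.card ι - 2) * c ^ (Fintype.card ι - 1) *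
        Fintype.card X ^ Fintype.card β := by
  have hcover : ({κ | (G κ).Connected} : Finset (β → X)) ⊆
      (treesOn univ).biUnion fun E => {κ | EdgesRelated R f E κ} := by
    intro κ hκ
    obtain ⟨T, hTG, hT⟩ := (mem_filter.1 hκ).2.exists_isTree_le
    exact mem_biUnion.2 ⟨T.edgeFinset, mem_treesOn.2 hT.isTreeOn_edgeFinset, mem_filter.2
      ⟨mem_univ _, fun a b hab => hG κ a b (hTG (SimpleGraph.mem_edgeFinset.1 hab))⟩⟩
  have htree : ∀ E ∈ treesOn (univ : Finset ι),
      #{κ | EdgesRelated R f E κ} * Fintype.card X ^ (Fintype.card ι - 1) ≤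
        c ^ (Fintype.card ι - 1) * Fintype.card X ^ Fintype.card β := fun E hE => by
    have hT := mem_treesOn.1 hE
    have hcard : #E = Fintype.card ι - 1 := by
      have := hT.card_add_one
      rw [card_univ] at this
      omega
    simpa [hcard] using hT.card_edgesRelated_mul_le f.injective hR
  calc #{κ | (G κ).Connected} * Fintype.card X ^ (Fintype.card ι - 1)
      ≤ (∑ E ∈ treesOn univ, #{κ | EdgesRelated R f E κ}) *
          Fintype.card X ^ (Fintype.card ι - 1) := by
        gcongr
        exact (card_le_card hcover).trans card_biUnion_le
    _ ≤ ∑ _E ∈ treesOn (univ : Finset ι), c ^ (Fintype.card ι - 1) *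
          Fintype.card X ^ Fintype.card β := by
        rw [sum_mul]
        exact sum_le_sum htree
    _ ≤ _ := by
        rw [sum_const, smul_eq_mul, mul_assoc]
        gcongr
        simpa using card_treesOn_le (univ : Finset ι)

end RelatedCount

theorem card_keyRing (P K : ℕ) : Fintype.card (KeyRing P K) = P.choose K := by
  rw [Fintype.card_finset_len, Fintype.card_fin]

theorem card_keyRing_inter_nonempty {P K : ℕ} (B : KeyRing P K) :
    #{A : KeyRing P K | (A.1 ∩ B.1).Nonempty} = P.choose K - (P - K).choose K := by
  have hdisj : #{A : KeyRing P K | ¬(A.1 ∩ B.1).Nonempty} = (P - K).choose K := by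
    have hmap : ({A : KeyRing P K | ¬(A.1 ∩ B.1).Nonempty} : Finset _).map
        (Function.Embedding.subtype _) = powersetCard K B.1ᶜ := by
      ext S
      simp [mem_powersetCard, subset_compl_iff_disjoint_right, disjoint_iff_inter_eq_empty,
        not_nonempty_iff_eq_empty, and_comm]
    rw [← card_map, hmap, card_powersetCard, card_compl, Fintype.card_fin, B.2]
  have := card_filter_add_card_filter_not (s := univ) fun A : KeyRing P K => (A.1 ∩ B.1).Nonempty
  rw [card_univ, card_keyRing, hdisj] at this
  omega

theorem stmt8_general (n P K r : ℕ) (h2K : 2 * K ≤ P) (hrn : r ≤ n) :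
    pr n P K (fun κ => (rkg (fun i : Fin r => κ (Fin.castLE hrn i))).Connected) ≤
      (r : ℝ) ^ (r - 2) * (1 - ((P - K).choose K : ℝ) / (P.choose K : ℝ)) ^ (r - 1) := by
  have hN : 0 < P.choose K := Nat.choose_pos (by omega)
  have hDN : (P - K).choose K ≤ P.choose K := Nat.choose_le_choose K (Nat.sub_le P K)
  have hcount := card_connected_mul_le (Fin.castLEEmb hrn)
    (fun κ : Fin n → KeyRing P K => rkg fun i => κ (Fin.castLE hrn i)) (fun _ _ _ h => h.2)
    (fun B => (card_keyRing_inter_nonempty B).le)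
  simp only [Fintype.card_fin, card_keyRing] at hcount
  rw [pr, Fintype.card_fun, card_keyRing, Fintype.card_fin, one_sub_div (by positivity),
    ← Nat.cast_sub hDN, div_pow, ← mul_div_assoc, div_le_div_iff₀ (by positivity) (by positivity)]
  norm_cast
  convert hcount using 4

/-- The probability that the subgraph of the random key graph induced on the
vertices `{1,…,r}` is connected is at most `r^(r-2) (1-q)^(r-1)`, where
`q = C(P-K, K)/C(P, K)`. -/
theorem stmt8 (n P K r : ℕ) (hK : 0 < K) (h2K : 2 * K ≤ P)
    (hr2 : 2 ≤ r) (hrn : r ≤ n) :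
    pr n P K (fun κ => (rkg (fun i : Fin r => κ (Fin.castLE hrn i))).Connected) ≤
      (r : ℝ) ^ (r - 2) * (1 - ((P - K).choose K : ℝ) / (P.choose K : ℝ)) ^ (r - 1) :=
  stmt8_general n P K r h2K hrn
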